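/- arXiv:0906.5559 — 4 statements merged into one kernel-verified Lean document; each statement's English description precedes it below -/
import Mathlib

section
/- Sylvester's theorem on real zeros: suppose λ_1,...,λ_r are nonzero reals, γ_1 < ... < γ_r are real numbers with r ≥ 2, and Q(t) = Σ_k λ_k (t - γ_k)^d does not vanish identically. If the sequence (λ_1,...,λ_r,(-1)^d λ_1) has C changes of sign, then Q has at most C real zeros counted with multiplicity. -/
/-!
Induction on `d`. If the sequence `λ_1, …, λ_r, (-1)^d λ_1` has no sign change, then `d` is even
and all `λ_k` have the same sign, so `Q` has no real zero. Otherwise take a sign change between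
`λ_j` and its successor and a point `c` with `γ_j < c < γ_{j+1}` (where `γ_{r+1} = +∞`). The
polar derivative `d Q + (c - t) Q'` equals `d ∑ λ_k (c - γ_k) (t - γ_k)^(d-1)`: its coefficient
sequence is the old one multiplied by `c - γ_1, …, c - γ_r, γ_1 - c`, which changes sign exactly
once, at `j`, so it has one sign change fewer. On the other hand the derivative of
`y ↦ y^d Q(c + 1/y)` is `y^(d-1)` times the polar derivative at `c + 1/y`, so Rolle's theorem for
this polynomial (the projective line seen from `c`) shows that the polar derivative has at most one
real zero fewer than `Q`. This needs `Q(c) ≠ 0`, and it excludes the single `c` for which the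
degree of the polar derivative falls below `deg Q - 1`, which would create spurious zeros at
`y = 0`.
-/

open Polynomial Finset

namespace Polynomial

section Reverse

variable {K : Type*} [Field K]

theorem card_roots_taylor (p : K[X]) (c : K) : (taylor c p).roots.card = p.roots.card := by
  rw [taylor_apply, ← one_mul X, ← C_1, roots_comp_C_mul_X_add_C _ _ _ isUnit_one,
    Multiset.card_map]

theorem reverse_X_sub_C {a : K} (ha : a ≠ 0) : reverse (X - C a) = C (-a) * (X - C a⁻¹) := by
  have hX : reverse (X : K[X]) = 1 := by
    simpa [← C_1, -map_one] using reverse_mul_X (1 : K[X])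
  rw [sub_eq_add_neg, ← C_neg, reverse_add_C, hX, natDegree_X, pow_one, mul_sub, ← C_mul,
    neg_mul, mul_inv_cancel₀ ha, C_neg, C_neg, C_1]
  ring

theorem reverse_pow (p : K[X]) (m : ℕ) : reverse (p ^ m) = reverse p ^ m := by
  induction m with
  | zero => simpa using reverse_C (1 : K)
  | succ m ih => rw [pow_succ, reverse_mul_of_domain, ih, pow_succ]

theorem reverse_reverse {p : K[X]} (h0 : p.coeff 0 ≠ 0) : reverse (reverse p) = p := by
  have : p.reverse.natDegree = p.natDegree := by
    rw [reverse_natDegree, natTrailingDegree_eq_zero.mpr (.inr h0), Nat.sub_zero]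
  rw [reverse, this, reverse, reflect_reflect]

theorem pow_X_sub_C_inv_dvd_reverse {p : K[X]} {a : K} (ha : a ≠ 0) {m : ℕ}
    (h : (X - C a) ^ m ∣ p) : (X - C a⁻¹) ^ m ∣ reverse p := by
  obtain ⟨q, rfl⟩ := h
  rw [reverse_mul_of_domain, reverse_pow, reverse_X_sub_C ha, mul_pow]
  exact (dvd_mul_left _ _).mul_right _

theorem card_roots_le_card_roots_reverse {p : K[X]} (h0 : p.coeff 0 ≠ 0) :
    p.roots.card ≤ p.reverse.roots.card := by
  classical
  have hp : p.reverse ≠ 0 := mt reverse_eq_zero.1 (by rintro rfl; exact h0 (coeff_zero 0))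
  rw [← Multiset.card_map Inv.inv]
  refine Multiset.card_le_card (Multiset.le_iff_count.2 fun y ↦ ?_)
  rw [← inv_inv y, Multiset.count_map_eq_count' _ _ inv_injective, count_roots, count_roots]
  rcases eq_or_ne y⁻¹ 0 with hy | hy
  · rw [hy, rootMultiplicity_eq_zero (by rwa [IsRoot, ← coeff_zero_eq_eval_zero])]
    exact Nat.zero_le _
  · exact (le_rootMultiplicity_iff hp).2
      (pow_X_sub_C_inv_dvd_reverse hy (pow_rootMultiplicity_dvd _ _))

theorem card_roots_reverse {p : K[X]} (h0 : p.coeff 0 ≠ 0) :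
    p.reverse.roots.card = p.roots.card := by
  refine le_antisymm ?_ (card_roots_le_card_roots_reverse h0)
  have h0' : p.reverse.coeff 0 ≠ 0 := by
    rw [coeff_zero_reverse, Ne, leadingCoeff_eq_zero]; rintro rfl; exact h0 (coeff_zero 0)
  simpa only [reverse_reverse h0] using card_roots_le_card_roots_reverse h0'

theorem card_roots_reflect {p : K[X]} {N : ℕ} (hN : p.natDegree ≤ N) (h0 : p.coeff 0 ≠ 0) :
    (reflect N p).roots.card = N - p.natDegree + p.roots.card := by
  have hp : p.reverse ≠ 0 := mt reverse_eq_zero.1 (by rintro rfl; exact h0 (coeff_zero 0))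
  have : reflect N p = X ^ (N - p.natDegree) * reverse p := by
    have h := reflect_mul 1 p (F := N - p.natDegree) (by simp) le_rfl
    rwa [one_mul, Nat.sub_add_cancel hN, reflect_one] at h
  rw [this, roots_mul (mul_ne_zero (pow_ne_zero _ X_ne_zero) hp), Multiset.card_add, roots_X_pow,
    Multiset.card_nsmul, Multiset.card_singleton, mul_one, card_roots_reverse h0]

end Reverse

section PolarDerivative

variable {R : Type*} [CommRing R]

noncomputable def polarDerivative (n : ℕ) (c : R) (p : R[X]) : R[X] :=
  C (n : R) * p + (C c - X) * derivative p

theorem coeff_polarDerivative (n : ℕ) (c : R) (p : R[X]) (k : ℕ) :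
    (polarDerivative n c p).coeff k = (n - k) * p.coeff k + c * ((k + 1) * p.coeff (k + 1)) := by
  have hX : (X * derivative p).coeff k = k * p.coeff k := by
    cases k with
    | zero => simp
    | succ k => rw [coeff_X_mul, coeff_derivative]; push_cast; ring
  rw [polarDerivative, sub_mul, coeff_add, coeff_sub, hX, coeff_C_mul, coeff_C_mul,
    coeff_derivative]
  ring

theorem eval_polarDerivative_self (n : ℕ) (c : R) (p : R[X]) :
    (polarDerivative n c p).eval c = n * p.eval c := by
  simp [polarDerivative]

theorem taylor_polarDerivative (n : ℕ) (c : R) (p : R[X]) :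
    taylor c (polarDerivative n c p) = polarDerivative n 0 (taylor c p) := by
  have hd : taylor c (derivative p) = derivative (taylor c p) := by
    rw [taylor_apply, taylor_apply, derivative_comp, derivative_add, derivative_X, derivative_C,
      add_zero, one_mul]
  simp only [polarDerivative, map_add, taylor_mul, taylor_C, map_sub, taylor_X, hd, C_0]
  ring

theorem natDegree_polarDerivative_le {n : ℕ} (c : R) {p : R[X]} (hp : p.natDegree ≤ n + 1) :
    (polarDerivative (n + 1) c p).natDegree ≤ n := by
  refine natDegree_le_iff_coeff_eq_zero.2 fun k hk ↦ ?_
  rw [coeff_polarDerivative, coeff_eq_zero_of_natDegree_lt (by omega : p.natDegree < k + 1)]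
  rcases (Nat.succ_le_of_lt hk).eq_or_lt with rfl | hk'
  · push_cast; ring
  · rw [coeff_eq_zero_of_natDegree_lt (by omega)]; ring

theorem derivative_reflect {n : ℕ} {p : R[X]} (hp : p.natDegree ≤ n + 1) :
    derivative (reflect (n + 1) p) = reflect n (polarDerivative (n + 1) 0 p) := by
  ext k
  rw [coeff_derivative, coeff_reflect, coeff_reflect, coeff_polarDerivative, zero_mul, add_zero]
  rcases le_or_gt k n with hk | hk
  · rw [revAt_le hk, revAt_le (by omega), show n + 1 - (k + 1) = n - k by omega,
      Nat.cast_sub hk]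
    push_cast; ring
  · rw [revAt_eq_self_of_lt (by omega), revAt_eq_self_of_lt hk,
      coeff_eq_zero_of_natDegree_lt (by omega : p.natDegree < k + 1)]
    rcases (Nat.succ_le_of_lt hk).eq_or_lt with rfl | hk'
    · push_cast; ring
    · rw [coeff_eq_zero_of_natDegree_lt (by omega)]; ring

theorem polarDerivative_sum_C_mul_X_sub_C_pow {ι : Type*} (s : Finset ι) (lam γ : ι → R)
    (d : ℕ) (c : R) :
    polarDerivative (d + 1) c (∑ k ∈ s, C (lam k) * (X - C (γ k)) ^ (d + 1)) =
      C ((d + 1 : ℕ) : R) * ∑ k ∈ s, C (lam k * (c - γ k)) * (X - C (γ k)) ^ d := by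
  simp only [polarDerivative, derivative_sum, derivative_C_mul, derivative_pow,
    derivative_X_sub_C, Nat.add_sub_cancel, mul_sum, ← sum_add_distrib]
  refine sum_congr rfl fun k _ ↦ ?_
  simp only [C_mul, C_sub, Nat.cast_add, Nat.cast_one, map_add, map_natCast, map_one]
  ring

theorem card_roots_le_card_roots_polarDerivative_add_one {n : ℕ} {c : ℝ} {p : ℝ[X]}
    (hp : p.natDegree ≤ n + 1) (hc : p.eval c ≠ 0)
    (hdeg : p.natDegree ≤ (polarDerivative (n + 1) c p).natDegree + 1) :
    p.roots.card ≤ (polarDerivative (n + 1) c p).roots.card + 1 := by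
  have hq : (taylor c p).natDegree ≤ n + 1 := by rwa [natDegree_taylor]
  have hq0 : (taylor c p).coeff 0 ≠ 0 := by rwa [taylor_coeff_zero]
  have hr : (polarDerivative (n + 1) 0 (taylor c p)).natDegree ≤ n :=
    natDegree_polarDerivative_le 0 hq
  have hr0 : (polarDerivative (n + 1) 0 (taylor c p)).coeff 0 ≠ 0 := by
    rw [coeff_zero_eq_eval_zero, eval_polarDerivative_self, ← coeff_zero_eq_eval_zero]
    exact mul_ne_zero (by positivity) hq0
  have hrolle := card_roots_le_derivative (reflect (n + 1) (taylor c p))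
  rw [derivative_reflect hq, card_roots_reflect (by omega) hq0, card_roots_reflect hr hr0,
    ← taylor_polarDerivative, natDegree_taylor, natDegree_taylor, card_roots_taylor,
    card_roots_taylor] at hrolle
  omega

theorem finite_setOf_natDegree_polarDerivative_add_one_lt {K : Type*} [Field K] [CharZero K]
    {n : ℕ} {p : K[X]} (hp : p.natDegree ≤ n + 1) :
    {c | (polarDerivative (n + 1) c p).natDegree + 1 < p.natDegree}.Finite := by
  rcases hp.lt_or_eq with hlt | heq
  · refine Set.Finite.subset Set.finite_empty fun c hc ↦ ?_
    have hp0 : p ≠ 0 := by rintro rfl; simp at hc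
    have : (polarDerivative (n + 1) c p).coeff p.natDegree ≠ 0 := by
      rw [coeff_polarDerivative, coeff_eq_zero_of_natDegree_lt (Nat.lt_succ_self _), mul_zero,
        mul_zero, add_zero]
      refine mul_ne_zero (sub_ne_zero.2 ?_) (leadingCoeff_ne_zero.2 hp0)
      exact_mod_cast hlt.ne'
    exact absurd (le_natDegree_of_ne_zero this) (by change _ + 1 < _ at hc; omega)
  · -- the coefficient of `X ^ n` in the polar derivative is affine in `c`, with nonzero slope
    refine Set.Subsingleton.finite fun c₁ hc₁ c₂ hc₂ ↦ ?_
    have hlead : ((n + 1 : ℕ) : K) * p.coeff (n + 1) ≠ 0 := by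
      refine mul_ne_zero (Nat.cast_ne_zero.2 n.succ_ne_zero) ?_
      rw [← heq]
      exact leadingCoeff_ne_zero.2 (by rintro rfl; simp at heq)
    have hcoeff : ∀ c, (polarDerivative (n + 1) c p).natDegree + 1 < p.natDegree →
        p.coeff n + c * (((n + 1 : ℕ) : K) * p.coeff (n + 1)) = 0 := by
      intro c hc
      by_contra h
      refine absurd (le_natDegree_of_ne_zero (p := polarDerivative (n + 1) c p) (n := n) ?_)
        (by omega)
      rw [coeff_polarDerivative]
      push_cast at h ⊢
      convert h using 2; ring
    exact mul_right_cancel₀ hlead (add_left_cancel ((hcoeff c₁ hc₁).trans (hcoeff c₂ hc₂).symm))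

end PolarDerivative

end Polynomial

section SignChanges

variable {α : Type*} [CommRing α] [LinearOrder α] [IsStrictOrderedRing α] {n : ℕ}

def signChanges (μ : Fin (n + 1) → α) : ℕ :=
  #{i : Fin n | μ i.castSucc * μ i.succ < 0}

theorem signChanges_mul_lt {μ τ : Fin (n + 1) → α} {j : Fin n}
    (hμ : μ j.castSucc * μ j.succ < 0) (hτ0 : ∀ i, τ i ≠ 0) (hτ : ∀ i, 0 < τ i ↔ i ≤ j.castSucc) :
    signChanges (μ * τ) < signChanges μ := by
  have hτneg : ∀ i, τ i < 0 ↔ ¬i ≤ j.castSucc := fun i ↦ by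
    rw [← hτ i, not_lt, (hτ0 i).le_iff_lt]
  have hτj : ∀ i : Fin n, τ i.castSucc * τ i.succ < 0 ↔ i = j := fun i ↦ by
    rw [mul_neg_iff, hτ, hτ, hτneg, hτneg, Fin.castSucc_le_castSucc_iff, Fin.succ_le_castSucc_iff]
    simp only [Fin.le_def, Fin.lt_def, Fin.ext_iff]
    omega
  have hsub : ({i : Fin n | (μ * τ) i.castSucc * (μ * τ) i.succ < 0} : Finset (Fin n)) ⊆
      ({i : Fin n | μ i.castSucc * μ i.succ < 0} : Finset (Fin n)).erase j := by
    intro i hi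
    simp only [mem_filter, mem_univ, true_and, mem_erase, Pi.mul_apply] at hi ⊢
    have hprod : μ i.castSucc * τ i.castSucc * (μ i.succ * τ i.succ) =
        μ i.castSucc * μ i.succ * (τ i.castSucc * τ i.succ) := by ring
    rw [hprod] at hi
    rcases eq_or_ne i j with rfl | hij
    · exact absurd hi (mul_pos_of_neg_of_neg hμ ((hτj i).2 rfl)).not_gt
    · have hτi : 0 < τ i.castSucc * τ i.succ :=
        (not_lt.1 ((hτj i).not.2 hij)).lt_of_ne (mul_ne_zero (hτ0 _) (hτ0 _)).symm
      exact ⟨hij, neg_of_mul_neg_left hi hτi.le⟩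
  exact (card_le_card hsub).trans_lt (card_erase_lt_of_mem (by simpa using hμ))

theorem mul_pos_of_signChanges_eq_zero {μ : Fin (n + 1) → α} (hμ : ∀ i, μ i ≠ 0)
    (h : signChanges μ = 0) (i : Fin (n + 1)) : 0 < μ 0 * μ i := by
  have hstep : ∀ i : Fin n, 0 < μ i.castSucc * μ i.succ := fun i ↦
    (not_lt.1 (filter_eq_empty_iff.1 (card_eq_zero.1 h) (mem_univ i))).lt_of_ne
      (mul_ne_zero (hμ _) (hμ _)).symm
  induction i using Fin.induction with
  | zero => exact mul_self_pos.2 (hμ 0)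
  | succ i ih =>
    have := mul_pos ih (hstep i)
    have hsq : 0 < μ i.castSucc * μ i.castSucc := mul_self_pos.2 (hμ _)
    exact pos_of_mul_pos_left (by convert this using 1; ring) hsq.le

end SignChanges

theorem pos_mul_eval_sum_C_mul_X_sub_C_pow {ι : Type*} [Fintype ι] [Nontrivial ι] {lam γ : ι → ℝ}
    {a : ℝ} (hlam : ∀ k, 0 < a * lam k) (hγ : Function.Injective γ) {d : ℕ} (hd : Even d)
    (x : ℝ) : 0 < a * (∑ k, C (lam k) * (X - C (γ k)) ^ d).eval x := by
  simp only [eval_finsetSum, eval_mul, eval_C, eval_pow, eval_sub, eval_X, mul_sum, ← mul_assoc]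
  obtain ⟨k, hk⟩ : ∃ k, x ≠ γ k := by
    obtain ⟨k₁, k₂, hne⟩ := exists_pair_ne ι
    by_contra! h
    exact hne (hγ ((h k₁).symm.trans (h k₂)))
  exact sum_pos' (fun k _ ↦ mul_nonneg (hlam k).le (hd.pow_nonneg _))
    ⟨k, mem_univ k, mul_pos (hlam k) (hd.pow_pos (sub_ne_zero.2 hk))⟩

theorem roots_sum_C_mul_X_sub_C_pow_eq_zero {r : ℕ} (hr : 2 ≤ r) {lam γ : Fin r → ℝ}
    (hlam : ∀ k, lam k ≠ 0) (hγ : Function.Injective γ) {d : ℕ} {μ : Fin (r + 1) → ℝ}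
    (hμ : ∀ i : Fin r, μ i.castSucc = lam i)
    (hμr : μ (Fin.last r) = (-1) ^ d * lam ⟨0, Nat.zero_lt_two.trans_le hr⟩)
    (h : signChanges μ = 0) :
    (∑ k, C (lam k) * (X - C (γ k)) ^ d).roots = 0 := by
  have : Nontrivial (Fin r) := Fin.nontrivial_iff_two_le.2 hr
  have hμne : ∀ i, μ i ≠ 0 := Fin.lastCases
    (by rw [hμr]; exact mul_ne_zero (pow_ne_zero _ (by norm_num)) (hlam _))
    (fun i ↦ by rw [hμ]; exact hlam i)
  have hpos := mul_pos_of_signChanges_eq_zero hμne h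
  have hμ0 : μ 0 = lam ⟨0, by omega⟩ := hμ ⟨0, by omega⟩
  have hd : Even d := by
    have := hpos (Fin.last r)
    rw [hμ0, hμr, mul_left_comm, mul_pos_iff_of_pos_right (mul_self_pos.2 (hlam _))] at this
    exact Nat.not_odd_iff_even.1 fun hodd ↦ absurd (hodd.pow_pos_iff.1 this) (by norm_num)
  have hlam0 : ∀ k, 0 < lam ⟨0, by omega⟩ * lam k := fun k ↦ by
    simpa only [hμ0, hμ] using hpos k.castSucc
  refine Multiset.eq_zero_of_forall_notMem fun x hx ↦ ?_
  have := pos_mul_eval_sum_C_mul_X_sub_C_pow hlam0 hγ hd x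
  rw [(mem_roots'.1 hx).2, mul_zero] at this
  exact lt_irrefl 0 this

theorem exists_notMem_between {α : Type*} [LinearOrder α] [DenselyOrdered α] [NoMaxOrder α]
    {r : ℕ} {γ : Fin r → α} (hγ : StrictMono γ) (j : Fin r) {F : Set α} (hF : F.Finite) :
    ∃ c ∉ F, γ j < c ∧ ∀ k, j < k → c < γ k := by
  obtain ⟨b, hjb, hbk⟩ : ∃ b, γ j < b ∧ ∀ k, j < k → b ≤ γ k := by
    by_cases h : (j : ℕ) + 1 < r
    · refine ⟨γ ⟨j + 1, h⟩, hγ (Fin.lt_def.2 (Nat.lt_succ_self _)), fun k hk ↦ hγ.monotone ?_⟩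
      rw [Fin.lt_def] at hk
      exact Fin.le_def.2 hk
    · obtain ⟨b, hb⟩ := exists_gt (γ j)
      exact ⟨b, hb, fun k hk ↦ absurd k.isLt (by rw [Fin.lt_def] at hk; omega)⟩
  obtain ⟨c, ⟨hjc, hcb⟩, hcF⟩ := (Set.Ioo_infinite hjb).exists_notMem_finite hF
  exact ⟨c, hcF, hjc, fun k hk ↦ hcb.trans_le (hbk k hk)⟩

section

variable {r : ℕ} {γ : Fin r → ℝ} {j : Fin r} {a c : ℝ}

theorem snoc_sub_ne_zero (hγ : Monotone γ) (hjc : γ j < c) (hck : ∀ k, j < k → c < γ k)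
    (ha : a < c) (i : Fin (r + 1)) :
    (Fin.snoc (fun k ↦ c - γ k) (a - c) : Fin (r + 1) → ℝ) i ≠ 0 := by
  induction i using Fin.lastCases with
  | last => rw [Fin.snoc_last]; linarith
  | cast i =>
    rw [Fin.snoc_castSucc, sub_ne_zero]
    rcases le_or_gt i j with h | h
    · exact ((hγ h).trans_lt hjc).ne'
    · exact (hck i h).ne

theorem pos_snoc_sub_iff (hγ : Monotone γ) (hjc : γ j < c) (hck : ∀ k, j < k → c < γ k)
    (ha : a < c) (i : Fin (r + 1)) :
    0 < (Fin.snoc (fun k ↦ c - γ k) (a - c) : Fin (r + 1) → ℝ) i ↔ i ≤ j.castSucc := by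
  induction i using Fin.lastCases with
  | last =>
    rw [Fin.snoc_last]
    exact iff_of_false (by linarith) (not_le.2 (Fin.castSucc_lt_last j))
  | cast i =>
    rw [Fin.snoc_castSucc, sub_pos, Fin.castSucc_le_castSucc_iff]
    exact ⟨fun h ↦ not_lt.1 fun hji ↦ lt_asymm h (hck i hji), fun h ↦ (hγ h).trans_lt hjc⟩

end

theorem card_roots_sum_C_mul_X_sub_C_pow_le_signChanges {r : ℕ} (hr : 2 ≤ r) (d : ℕ)
    {lam γ : Fin r → ℝ} (hlam : ∀ k, lam k ≠ 0) (hγ : StrictMono γ) {μ : Fin (r + 1) → ℝ}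
    (hμ : ∀ i : Fin r, μ i.castSucc = lam i)
    (hμr : μ (Fin.last r) = (-1) ^ d * lam ⟨0, Nat.zero_lt_two.trans_le hr⟩) :
    (∑ k, C (lam k) * (X - C (γ k)) ^ d).roots.card ≤ signChanges μ := by
  induction d generalizing lam μ with
  | zero => simp [← map_sum]
  | succ d ih =>
    set Q := ∑ k, C (lam k) * (X - C (γ k)) ^ (d + 1)
    rcases Nat.eq_zero_or_pos (signChanges μ) with h0 | hpos
    · rw [roots_sum_C_mul_X_sub_C_pow_eq_zero hr hlam hγ.injective hμ hμr h0]
      exact Nat.zero_le _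
    obtain ⟨j, hj⟩ : ∃ j : Fin r, μ j.castSucc * μ j.succ < 0 := by
      simpa [signChanges, Finset.card_pos, Finset.filter_nonempty_iff] using hpos
    rcases eq_or_ne Q 0 with hQ0 | hQ0
    · simp [hQ0]
    have hQdeg : Q.natDegree ≤ d + 1 := natDegree_sum_le_of_forall_le _ _ fun k _ ↦
      (natDegree_C_mul_le _ _).trans (by rw [natDegree_pow, natDegree_X_sub_C, mul_one])
    obtain ⟨c, hcF, hjc, hck⟩ := exists_notMem_between hγ j (Q.roots.toFinset.finite_toSet.union
      (finite_setOf_natDegree_polarDerivative_add_one_lt hQdeg))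
    simp only [Set.mem_union, Finset.mem_coe, Multiset.mem_toFinset, mem_roots hQ0, IsRoot,
      Set.mem_ofPred_eq, not_or, not_lt] at hcF
    have hrolle := card_roots_le_card_roots_polarDerivative_add_one hQdeg hcF.1 hcF.2
    rw [polarDerivative_sum_C_mul_X_sub_C_pow, roots_C_mul _ (by positivity)] at hrolle
    have h0c : γ ⟨0, by omega⟩ < c := (hγ.monotone (Fin.le_def.2 (Nat.zero_le _))).trans_lt hjc
    have hτ0 := snoc_sub_ne_zero hγ.monotone hjc hck h0c
    have hIH := ih (lam := fun k ↦ lam k * (c - γ k))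
      (μ := μ * Fin.snoc (fun k ↦ c - γ k) (γ ⟨0, by omega⟩ - c))
      (fun k ↦ by simpa using mul_ne_zero (hlam k) (hτ0 k.castSucc)) (fun i ↦ by simp [hμ])
      (by simp only [Pi.mul_apply, hμr, Fin.snoc_last, pow_succ]; ring)
    have := signChanges_mul_lt hj hτ0 (pos_snoc_sub_iff hγ.monotone hjc hck h0c)
    omega

theorem stmt3 (r d : ℕ) (hr : 2 ≤ r) (lam γ : Fin r → ℝ)
    (hlam : ∀ k, lam k ≠ 0) (hγ : StrictMono γ)
    (Q : Polynomial ℝ)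
    (hQ : Q = ∑ k : Fin r, Polynomial.C (lam k) * (Polynomial.X - Polynomial.C (γ k)) ^ d)
    (μ : Fin (r+1) → ℝ)
    (hμ : ∀ i : Fin r, μ i.castSucc = lam i)
    (hμr : μ (Fin.last r) = (-1)^d * lam ⟨0, by omega⟩) :
    Q.roots.card ≤ Nat.card {i : Fin r // μ i.castSucc * μ i.succ < 0} := by
  rw [Nat.card_eq_fintype_card, Fintype.card_subtype, hQ]
  exact card_roots_sum_C_mul_X_sub_C_pow_le_signChanges hr d hlam hγ hμ hμr
end

section
/- For binary forms: p(x,y) = Σ_{k=1}^r λ_k (α_k x + β_k y)^{2s} holds if and only if the catalecticant quadratic form satisfies H_p(t) = Σ_{k=1}^r λ_k (Σ_{i=0}^s α_k^{s-i} β_k^i t_i)^2. -/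
/-!
Both identities are equivalent to the moment equations
`a m = ∑ k, λ k * α k ^ (2s - m) * β k ^ m` for `m ≤ 2s`. For the binary form this is comparison of
coefficients after the binomial expansion (dehomogenize at `x = 1`, then divide by `C(2s, m) ≠ 0`).
For the catalecticant, the right-hand side is the quadratic form of the symmetric matrix
`∑ k, λ k * v_k v_kᵀ` with `(v_k)_i = α k ^ (s - i) * β k ^ i`, whose `(i, j)` entry is the
moment of index `i + j`; by polarization two symmetric matrices with the same quadratic form agree,
and every `m ≤ 2s` is of the form `i + j` with `i, j ≤ s`.
-/

open Finset Polynomial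

theorem eq_of_forall_sum_range_mul_pow_eq {R : Type*} [CommRing R] [IsDomain R] [Infinite R]
    {n : ℕ} {c d : ℕ → R}
    (h : ∀ y : R, ∑ j ∈ range (n + 1), c j * y ^ j = ∑ j ∈ range (n + 1), d j * y ^ j)
    {m : ℕ} (hm : m ≤ n) : c m = d m := by
  have hpoly : ∑ j ∈ range (n + 1), C (c j) * X ^ j = ∑ j ∈ range (n + 1), C (d j) * X ^ j :=
    Polynomial.funext fun y => by simpa [eval_finsetSum] using h y
  have hmem : m ∈ range (n + 1) := mem_range.mpr (Nat.lt_succ_of_le hm)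
  simpa [finsetSum_coeff, coeff_C_mul_X_pow, hmem] using congrArg (coeff · m) hpoly

theorem sum_mul_add_pow_eq_sum_choose {R : Type*} [CommSemiring R] {ι : Type*} (u : Finset ι)
    (lam α β : ι → R) (n : ℕ) (x y : R) :
    ∑ k ∈ u, lam k * (α k * x + β k * y) ^ n =
      ∑ j ∈ range (n + 1), (n.choose j : R) * (∑ k ∈ u, lam k * (α k ^ (n - j) * β k ^ j)) *
        x ^ (n - j) * y ^ j := by
  simp_rw [add_comm (α _ * x), add_pow, mul_sum, sum_mul]
  rw [sum_comm]
  refine sum_congr rfl fun j _ => sum_congr rfl fun k _ => ?_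
  ring

theorem sum_choose_mul_pow_eq_sum_mul_add_pow_iff {K : Type*} [Field K] [CharZero K] {ι : Type*}
    (u : Finset ι) (n : ℕ) (a : ℕ → K) (lam α β : ι → K) :
    (∀ x y : K, ∑ j ∈ range (n + 1), (n.choose j : K) * a j * x ^ (n - j) * y ^ j =
        ∑ k ∈ u, lam k * (α k * x + β k * y) ^ n) ↔
      ∀ m ≤ n, a m = ∑ k ∈ u, lam k * (α k ^ (n - m) * β k ^ m) := by
  simp_rw [sum_mul_add_pow_eq_sum_choose]
  constructor
  · intro h m hm
    have hcoeff := eq_of_forall_sum_range_mul_pow_eq (fun y => by simpa using h 1 y) hm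
    exact mul_left_cancel₀ (Nat.cast_ne_zero.mpr (Nat.choose_pos hm).ne') hcoeff
  · intro h x y
    refine sum_congr rfl fun j hj => ?_
    rw [h j (Nat.lt_succ_iff.mp (mem_range.mp hj))]

theorem sum_mul_sq_sum_mul {R : Type*} [CommSemiring R] {ι κ : Type*} [Fintype ι] [Fintype κ]
    (lam : κ → R) (c : κ → ι → R) (t : ι → R) :
    ∑ k, lam k * (∑ i, c k i * t i) ^ 2 = ∑ i, ∑ j, (∑ k, lam k * (c k i * c k j)) * t i * t j := by
  simp_rw [sq, sum_mul_sum, mul_sum, sum_mul]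
  rw [sum_comm]
  refine sum_congr rfl fun i _ => ?_
  rw [sum_comm]
  refine sum_congr rfl fun j _ => sum_congr rfl fun k _ => ?_
  ring

theorem sum_sum_mul_single_add_single {R : Type*} [CommSemiring R] {ι : Type*} [Fintype ι]
    [DecidableEq ι] (M : ι → ι → R) (i j : ι) :
    ∑ p, ∑ q, M p q * (Pi.single i 1 + Pi.single j 1 : ι → R) p *
        (Pi.single i 1 + Pi.single j 1 : ι → R) q = M i i + M i j + M j i + M j j := by
  simp [Pi.single_apply, mul_add, sum_add_distrib]
  ring

theorem sum_sum_mul_single_mul_single {R : Type*} [CommSemiring R] {ι : Type*} [Fintype ι]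
    [DecidableEq ι] (M : ι → ι → R) (i : ι) :
    ∑ p, ∑ q, M p q * (Pi.single i 1 : ι → R) p * (Pi.single i 1 : ι → R) q = M i i := by
  simp [Pi.single_apply]

theorem forall_sum_sum_mul_eq_iff {K : Type*} [Field K] [NeZero (2 : K)] {ι : Type*} [Fintype ι]
    {M N : ι → ι → K} (hM : ∀ i j, M i j = M j i) (hN : ∀ i j, N i j = N j i) :
    (∀ t : ι → K, ∑ i, ∑ j, M i j * t i * t j = ∑ i, ∑ j, N i j * t i * t j) ↔
      ∀ i j, M i j = N i j := by
  classical
  refine ⟨fun h i j => ?_, fun h t => by simp_rw [h]⟩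
  have hij := h (Pi.single i 1 + Pi.single j 1)
  have hi := h (Pi.single i 1)
  have hj := h (Pi.single j 1)
  simp only [sum_sum_mul_single_add_single] at hij
  simp only [sum_sum_mul_single_mul_single] at hi hj
  rw [hM j i, hN j i] at hij
  have : 2 * M i j = 2 * N i j := by linear_combination hij - hi - hj
  exact mul_left_cancel₀ two_ne_zero this

theorem forall_fin_add_iff {s : ℕ} {P : ℕ → Prop} :
    (∀ i j : Fin (s + 1), P (i + j)) ↔ ∀ m ≤ 2 * s, P m := by
  refine ⟨fun h m hm => ?_, fun h i j => h _ (by omega)⟩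
  simpa [show min m s + (m - min m s) = m by omega] using
    h ⟨min m s, by omega⟩ ⟨m - min m s, by omega⟩

theorem stmt6 (s r : ℕ) (a : ℕ → ℝ) (lam α β : Fin r → ℝ) :
    (∀ x y : ℝ,
      ∑ j ∈ Finset.range (2*s+1), (Nat.choose (2*s) j : ℝ) * a j * x^(2*s-j) * y^j
        = ∑ k : Fin r, lam k * (α k * x + β k * y)^(2*s))
    ↔ (∀ t : Fin (s+1) → ℝ,
      ∑ i : Fin (s+1), ∑ j : Fin (s+1), a ((i:ℕ)+(j:ℕ)) * t i * t j
        = ∑ k : Fin r, lam k * (∑ i : Fin (s+1), α k ^ (s-(i:ℕ)) * β k ^ (i:ℕ) * t i)^2) := by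
  have hentry : ∀ i j : Fin (s + 1), ∀ k,
      α k ^ (s - i) * β k ^ (i : ℕ) * (α k ^ (s - j) * β k ^ (j : ℕ)) =
        α k ^ (2 * s - (i + j)) * β k ^ ((i : ℕ) + j) := fun i j k => by
    rw [show 2 * s - (i + j) = (s - i) + (s - j) by omega, pow_add, pow_add]
    ring
  rw [sum_choose_mul_pow_eq_sum_mul_add_pow_iff, ← forall_fin_add_iff]
  simp_rw [sum_mul_sq_sum_mul]
  rw [forall_sum_sum_mul_eq_iff (fun i j => by rw [add_comm]) (fun i j => by simp_rw [mul_comm])]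
  simp_rw [hentry]
end

section
/- If p ∈ F_{2,2s}, q(x,y) = p(αx + βy, γx + δy) with αδ - βγ ≠ 0, then the catalecticant quadratic forms H_p and H_q have the same signature (equal numbers of positive and negative eigenvalues). -/
/-!
Write a binary form of degree `N` as `p(x, y) = L_a((x + yX)^N)`, where `L_a` is the linear
functional on polynomials with `L_a(X^m) = a_m`; then `H_p` is the Gram matrix of
`(P, Q) ↦ L_a(P Q)` on polynomials of degree `≤ s`. The substitution
`(x, y) ↦ (αx + βy, γx + δy)` turns `x + yX` into `x u + y w` with `u = α + γX` and
`w = β + δX`, so comparing coefficients of `q` gives `b_m = L_a(u^{2s-m} w^m)`, i.e.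
`H_q = Mᵀ H_p M` where the columns of `M` are the coefficient vectors of `u^{s-k} w^k`.
The inverse substitution gives `H_p = Nᵀ H_q N` as well, so it remains to see that `B = Mᵀ A M`
forces `B` to have at most as many positive eigenvalues as `A`. Indeed `M` maps the span of the
positive eigenvectors of `B` to a subspace on which the form of `A` is positive definite, and
projecting such a subspace onto the positive eigenvectors of `A` is injective, since the form of
`A` is `≤ 0` on the kernel of the projection. Negative eigenvalues are handled by replacing
`A`, `B` with `-A`, `-B`.
-/

open Polynomial Finset Module
open scoped Matrix InnerProductSpace

section BinaryForm

variable {R : Type*} [CommRing R]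

def binaryForm (N : ℕ) (a : ℕ → R) (x y : R) : R :=
  ∑ j ∈ range (N + 1), (N.choose j : R) * a j * x ^ (N - j) * y ^ j

lemma binaryForm_eq_comp_of_mul_eq_one {N : ℕ} {a b : ℕ → R} {α β γ δ α' β' γ' δ' : R}
    (h : ∀ x y, binaryForm N b x y = binaryForm N a (α * x + β * y) (γ * x + δ * y))
    (h₁₁ : α * α' + β * γ' = 1) (h₁₂ : α * β' + β * δ' = 0) (h₂₁ : γ * α' + δ * γ' = 0)
    (h₂₂ : γ * β' + δ * δ' = 1) (x y : R) :
    binaryForm N a x y = binaryForm N b (α' * x + β' * y) (γ' * x + δ' * y) := by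
  rw [h, show α * (α' * x + β' * y) + β * (γ' * x + δ' * y) = x by
      linear_combination x * h₁₁ + y * h₁₂,
    show γ * (α' * x + β' * y) + δ * (γ' * x + δ' * y) = y by
      linear_combination x * h₂₁ + y * h₂₂]

noncomputable def momentFunctional (a : ℕ → R) : R[X] →ₗ[R] R :=
  lsum fun m => a m • LinearMap.id

lemma momentFunctional_monomial (a : ℕ → R) (m : ℕ) (c : R) :
    momentFunctional a (monomial m c) = c * a m := by
  simp [momentFunctional, mul_comm]

lemma momentFunctional_C_add_C_mul_X_pow (a : ℕ → R) (x y : R) (N : ℕ) :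
    momentFunctional a ((C x + C y * X) ^ N) = binaryForm N a x y := by
  rw [add_comm, add_pow, map_sum]
  refine sum_congr rfl fun j _ => ?_
  rw [show (C y * X) ^ j * C x ^ (N - j) * (N.choose j : R[X]) =
      monomial j (y ^ j * x ^ (N - j) * N.choose j) by
    rw [← C_mul_X_pow_eq_monomial]; simp only [C_mul, C_pow, C_eq_natCast]; ring,
    momentFunctional_monomial]
  ring

lemma momentFunctional_mul {s : ℕ} (a : ℕ → R) {P Q : R[X]} (hP : P.natDegree ≤ s)
    (hQ : Q.natDegree ≤ s) :
    momentFunctional a (P * Q) =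
      ∑ i : Fin (s + 1), ∑ j : Fin (s + 1), P.coeff i * a (i + j) * Q.coeff j := by
  conv_lhs => rw [P.as_sum_range' (s + 1) (by omega), Q.as_sum_range' (s + 1) (by omega)]
  simp only [sum_mul_sum, map_sum, monomial_mul_monomial, momentFunctional_monomial]
  rw [← Fin.sum_univ_eq_sum_range]
  refine sum_congr rfl fun i _ => ?_
  rw [← Fin.sum_univ_eq_sum_range]
  refine sum_congr rfl fun j _ => ?_
  ring

lemma natDegree_C_add_C_mul_X_pow_mul_pow_le (p q p' q' : R) {i j n : ℕ} (h : i + j ≤ n) :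
    ((C p + C q * X) ^ i * (C p' + C q' * X) ^ j).natDegree ≤ n := by
  have hlin : ∀ p q : R, (C p + C q * X).natDegree ≤ 1 := fun p q => by
    rw [add_comm]; exact natDegree_linear_le
  refine natDegree_mul_le.trans (le_trans (add_le_add ?_ ?_) h) <;>
    simpa using natDegree_pow_le_of_le _ (hlin _ _)

end BinaryForm

section Hankel

variable {R : Type*} [CommRing R]

def hankel (s : ℕ) (a : ℕ → R) : Matrix (Fin (s + 1)) (Fin (s + 1)) R :=
  Matrix.of fun i j => a (i + j)

noncomputable def substMatrix (s : ℕ) (α β γ δ : R) : Matrix (Fin (s + 1)) (Fin (s + 1)) R :=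
  Matrix.of fun i k => ((C α + C γ * X) ^ (s - k) * (C β + C δ * X) ^ (k : ℕ)).coeff i

variable {K : Type*} [Field K] [CharZero K]

lemma eq_of_binaryForm_one_eq {N : ℕ} {a b : ℕ → K}
    (h : ∀ t, binaryForm N a 1 t = binaryForm N b 1 t) {m : ℕ} (hm : m ≤ N) : a m = b m := by
  let poly (c : ℕ → K) : K[X] := ∑ j ∈ range (N + 1), C ((N.choose j : K) * c j) * X ^ j
  have hpoly : poly a = poly b := Polynomial.funext fun t => by
    simpa [poly, binaryForm, eval_finsetSum, mul_comm] using h t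
  have hcoeff := congr_arg (coeff · m) hpoly
  simp only [poly, finsetSum_coeff, coeff_C_mul_X_pow, sum_ite_eq, mem_range,
    Nat.lt_succ_of_le hm, if_true] at hcoeff
  exact mul_left_cancel₀ (Nat.cast_ne_zero.mpr (Nat.choose_pos hm).ne') hcoeff

theorem hankel_eq_transpose_mul_hankel_mul {s : ℕ} {a b : ℕ → K} {α β γ δ : K}
    (h : ∀ x y,
      binaryForm (2 * s) b x y = binaryForm (2 * s) a (α * x + β * y) (γ * x + δ * y)) :
    hankel s b = (substMatrix s α β γ δ)ᵀ * hankel s a * substMatrix s α β γ δ := by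
  set u := C α + C γ * X
  set w := C β + C δ * X
  let c (m : ℕ) := momentFunctional a (u ^ (2 * s - m) * w ^ m)
  have hform : ∀ t, binaryForm (2 * s) b 1 t = binaryForm (2 * s) c 1 t := fun t => by
    have hlin : C (α * 1 + β * t) + C (γ * 1 + δ * t) * X = C t * w + C 1 * u := by
      simp only [u, w, C_add, C_mul]; ring
    rw [h, ← momentFunctional_C_add_C_mul_X_pow, hlin, add_pow, map_sum, binaryForm]
    refine sum_congr rfl fun j _ => ?_
    rw [show (C t * w) ^ j * (C 1 * u) ^ (2 * s - j) * ((2 * s).choose j : K[X]) =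
        ((2 * s).choose j * t ^ j : K) • (u ^ (2 * s - j) * w ^ j) by
      rw [smul_eq_C_mul, map_mul, map_pow, map_natCast, C_1, mul_pow, mul_pow, one_pow]; ring,
      map_smul, smul_eq_mul, one_pow, mul_one]
    ring
  have hbc : ∀ m ≤ 2 * s, b m = c m := fun m hm => eq_of_binaryForm_one_eq hform hm
  ext k l
  simp only [hankel, substMatrix, Matrix.of_apply, Matrix.mul_apply, Matrix.transpose_apply,
    sum_mul]
  rw [hbc _ (by omega), sum_comm]
  simp only [c]
  rw [show u ^ (2 * s - ((k : ℕ) + l)) * w ^ ((k : ℕ) + l) =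
      u ^ (s - k : ℕ) * w ^ (k : ℕ) * (u ^ (s - l : ℕ) * w ^ (l : ℕ)) by
      rw [show 2 * s - (k + l) = (s - k) + (s - l) by omega]; ring,
    momentFunctional_mul a (natDegree_C_add_C_mul_X_pow_mul_pow_le _ _ _ _ (n := s) (by omega))
      (natDegree_C_add_C_mul_X_pow_mul_pow_le _ _ _ _ (n := s) (by omega))]

end Hankel

section Inertia

variable {ι E : Type*} [Fintype ι] [NormedAddCommGroup E] [InnerProductSpace ℝ E]
  {T : E →ₗ[ℝ] E} {μ : ι → ℝ}

lemma Orthonormal.inner_sum_smul_map_sum_smul {w : ι → E} (hw : Orthonormal ℝ w)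
    (hT : ∀ i, T (w i) = μ i • w i) (c : ι → ℝ) :
    ⟪∑ i, c i • w i, T (∑ i, c i • w i)⟫_ℝ = ∑ i, μ i * c i ^ 2 := by
  simp only [map_sum, map_smul, hT, smul_smul]
  rw [hw.inner_sum]
  refine sum_congr rfl fun i _ => ?_
  simp only [conj_trivial]
  ring

variable (v : OrthonormalBasis ι ℝ E)

lemma OrthonormalBasis.inner_map_self_eq_sum (hT : ∀ i, T (v i) = μ i • v i) (x : E) :
    ⟪x, T x⟫_ℝ = ∑ i, μ i * ⟪v i, x⟫_ℝ ^ 2 := by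
  conv_lhs => rw [← v.sum_repr' x]
  exact v.orthonormal.inner_sum_smul_map_sum_smul hT _

lemma OrthonormalBasis.finrank_le_card_pos_of_inner_map_pos (hT : ∀ i, T (v i) = μ i • v i)
    {V : Type*} [AddCommGroup V] [Module ℝ V]
    (f : V →ₗ[ℝ] E) (hf : ∀ x ≠ 0, 0 < ⟪f x, T (f x)⟫_ℝ) :
    finrank ℝ V ≤ Nat.card {i // 0 < μ i} := by
  classical
  let coords : V →ₗ[ℝ] {i // 0 < μ i} → ℝ :=
    LinearMap.pi fun i => (innerSL ℝ (v i)).toLinearMap ∘ₗ f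
  have hinj : Function.Injective coords := by
    rw [← LinearMap.ker_eq_bot, Submodule.eq_bot_iff]
    intro x hx
    by_contra hx0
    have hzero : ∀ i, 0 < μ i → ⟪v i, f x⟫_ℝ = 0 := fun i hi =>
      congr_fun (LinearMap.mem_ker.mp hx) ⟨i, hi⟩
    have hnonpos : ⟪f x, T (f x)⟫_ℝ ≤ 0 := by
      rw [v.inner_map_self_eq_sum hT]
      refine sum_nonpos fun i _ => ?_
      rcases lt_or_ge 0 (μ i) with hi | hi
      · simp [hzero i hi]
      · exact mul_nonpos_of_nonpos_of_nonneg hi (sq_nonneg _)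
    exact (hf x hx0).not_ge hnonpos
  simpa [Nat.card_eq_fintype_card] using LinearMap.finrank_le_finrank_of_injective hinj

lemma OrthonormalBasis.exists_linearMap_inner_map_pos (hT : ∀ i, T (v i) = μ i • v i) :
    ∃ g : ({i // 0 < μ i} → ℝ) →ₗ[ℝ] E, ∀ c ≠ 0, 0 < ⟪g c, T (g c)⟫_ℝ := by
  classical
  refine ⟨Fintype.linearCombination ℝ fun i : {i // 0 < μ i} => v i, fun c hc => ?_⟩
  have hw : Orthonormal ℝ fun i : {i // 0 < μ i} => v i :=
    v.orthonormal.comp _ Subtype.val_injective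
  rw [Fintype.linearCombination_apply, hw.inner_sum_smul_map_sum_smul (fun i => hT i)]
  obtain ⟨i, hi⟩ := Function.ne_iff.mp hc
  exact sum_pos' (fun j _ => mul_nonneg j.2.le (sq_nonneg _))
    ⟨i, mem_univ _, mul_pos i.2 (sq_pos_of_ne_zero hi)⟩

theorem OrthonormalBasis.card_pos_le_of_inner_map_eq {ι' E' : Type*} [Fintype ι']
    [NormedAddCommGroup E'] [InnerProductSpace ℝ E'] {T' : E' →ₗ[ℝ] E'} {μ' : ι' → ℝ}
    (hT : ∀ i, T (v i) = μ i • v i) (v' : OrthonormalBasis ι' ℝ E')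
    (hT' : ∀ i, T' (v' i) = μ' i • v' i)
    (F : E' →ₗ[ℝ] E) (hF : ∀ x, ⟪x, T' x⟫_ℝ = ⟪F x, T (F x)⟫_ℝ) :
    Nat.card {i // 0 < μ' i} ≤ Nat.card {i // 0 < μ i} := by
  classical
  obtain ⟨g, hg⟩ := v'.exists_linearMap_inner_map_pos hT'
  have h := v.finrank_le_card_pos_of_inner_map_pos hT (F ∘ₗ g) fun c hc => (hF (g c)) ▸ hg c hc
  simpa [Nat.card_eq_fintype_card] using h

end Inertia

namespace Matrix

variable {n : Type*} [Fintype n] [DecidableEq n] {A B M : Matrix n n ℝ}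

lemma IsHermitian.toEuclideanLin_eigenvectorBasis (hA : A.IsHermitian) (i : n) :
    toEuclideanLin A (hA.eigenvectorBasis i) = hA.eigenvalues i • hA.eigenvectorBasis i := by
  rw [toLpLin_apply, hA.mulVec_eigenvectorBasis]
  rfl

lemma inner_toEuclideanLin_transpose_mul_mul (x : EuclideanSpace ℝ n) :
    ⟪x, toEuclideanLin (Mᵀ * A * M) x⟫_ℝ =
      ⟪toEuclideanLin M x, toEuclideanLin A (toEuclideanLin M x)⟫_ℝ := by
  rw [← conjTranspose_eq_transpose_of_trivial, toLpLin_mul_same, toLpLin_mul_same,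
    toEuclideanLin_conjTranspose_eq_adjoint]
  simp only [LinearMap.comp_apply]
  exact LinearMap.adjoint_inner_right (toEuclideanLin M) _ _

theorem IsHermitian.card_pos_eigenvalues_le_of_eq_transpose_mul_mul (hA : A.IsHermitian)
    (hB : B.IsHermitian) (h : B = Mᵀ * A * M) :
    Nat.card {i // 0 < hB.eigenvalues i} ≤ Nat.card {i // 0 < hA.eigenvalues i} :=
  hA.eigenvectorBasis.card_pos_le_of_inner_map_eq hA.toEuclideanLin_eigenvectorBasis
    hB.eigenvectorBasis hB.toEuclideanLin_eigenvectorBasis (toEuclideanLin M)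
    fun x => h ▸ inner_toEuclideanLin_transpose_mul_mul x

theorem IsHermitian.card_neg_eigenvalues_le_of_eq_transpose_mul_mul (hA : A.IsHermitian)
    (hB : B.IsHermitian) (h : B = Mᵀ * A * M) :
    Nat.card {i // hB.eigenvalues i < 0} ≤ Nat.card {i // hA.eigenvalues i < 0} := by
  have key := hA.eigenvectorBasis.card_pos_le_of_inner_map_eq (T := -toEuclideanLin A)
    (μ := -hA.eigenvalues) (fun i => by simp [hA.toEuclideanLin_eigenvectorBasis])
    hB.eigenvectorBasis (T' := -toEuclideanLin B) (μ' := -hB.eigenvalues)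
    (fun i => by simp [hB.toEuclideanLin_eigenvectorBasis]) (toEuclideanLin M)
    fun x => by
      simp only [LinearMap.neg_apply, inner_neg_right, h, inner_toEuclideanLin_transpose_mul_mul]
  simpa only [Pi.neg_apply, neg_pos] using key

end Matrix

theorem stmt7 (s : ℕ) (a b : ℕ → ℝ) (α β γ δ : ℝ) (hdet : α*δ - β*γ ≠ 0)
    (hq : ∀ x y : ℝ,
      ∑ j ∈ Finset.range (2*s+1), (Nat.choose (2*s) j : ℝ) * b j * x^(2*s-j) * y^j
      = ∑ j ∈ Finset.range (2*s+1),
          (Nat.choose (2*s) j : ℝ) * a j * (α*x+β*y)^(2*s-j) * (γ*x+δ*y)^j)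
    (A B : Matrix (Fin (s+1)) (Fin (s+1)) ℝ)
    (hA : A = Matrix.of fun i j : Fin (s+1) => a ((i:ℕ)+(j:ℕ)))
    (hB : B = Matrix.of fun i j : Fin (s+1) => b ((i:ℕ)+(j:ℕ)))
    (hAh : A.IsHermitian) (hBh : B.IsHermitian) :
    Nat.card {i // 0 < hAh.eigenvalues i} = Nat.card {i // 0 < hBh.eigenvalues i} ∧
    Nat.card {i // hAh.eigenvalues i < 0} = Nat.card {i // hBh.eigenvalues i < 0} := by
  set D := α*δ - β*γ
  have hinv := binaryForm_eq_comp_of_mul_eq_one hq (α' := δ / D) (β' := -β / D) (γ' := -γ / D)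
    (δ' := α / D) (by field_simp; ring) (by field_simp; ring) (by field_simp; ring)
    (by field_simp; ring)
  have hBA : B = (substMatrix s α β γ δ)ᵀ * A * substMatrix s α β γ δ := by
    rw [hA, hB]; exact hankel_eq_transpose_mul_hankel_mul hq
  have hAB : A = (substMatrix s (δ / D) (-β / D) (-γ / D) (α / D))ᵀ * B *
      substMatrix s (δ / D) (-β / D) (-γ / D) (α / D) := by
    rw [hA, hB]; exact hankel_eq_transpose_mul_hankel_mul hinv
  exact ⟨le_antisymm (hBh.card_pos_eigenvalues_le_of_eq_transpose_mul_mul hAh hAB)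
      (hAh.card_pos_eigenvalues_le_of_eq_transpose_mul_mul hBh hBA),
    le_antisymm (hBh.card_neg_eigenvalues_le_of_eq_transpose_mul_mul hAh hAB)
      (hAh.card_neg_eigenvalues_le_of_eq_transpose_mul_mul hBh hBA)⟩
end

section
/- If p ∈ F_{2,2s} has an honest representation with badge (a,b) (a positive and b negative coefficients of 2s-th powers of real linear forms), then the signature (p_H, n_H) of the catalecticant H_p satisfies p_H ≤ a and n_H ≤ b. -/
/-!
Comparing coefficients in `p = ∑ λₖ (αₖ x + βₖ y)^(2s)` gives `aₘ = ∑ λₖ αₖ^(2s-m) βₖ^m`, so the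
catalecticant is `∑ λₖ wₖ wₖᵀ` with `wₖ = (αₖ^(s-i) βₖ^i)ᵢ`, and its quadratic form is
`∑ λₖ ⟨wₖ, x⟩²`. The spectral theorem writes the same form as `∑ μᵢ ⟨uᵢ, x⟩²` with `(uᵢ)` an
orthonormal basis. If more `μᵢ` than `λₖ` were positive, a dimension count would give a nonzero `x`
orthogonal to the `uᵢ` with `μᵢ ≤ 0` and to the `wₖ` with `λₖ > 0`; the first expression is then
positive at `x` and the second one nonpositive. Negating both sides handles negative signs.
-/

open Matrix Polynomial

theorem Polynomial.coeff_C_mul_X_add_C_pow {R : Type*} [CommSemiring R] (a b : R) (n k : ℕ) :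
    ((C b * X + C a) ^ n).coeff k = a ^ (n - k) * n.choose k * b ^ k := by
  have h : (C b * X + C a) ^ n = ((X + C a) ^ n).comp (C b * X) := by simp
  rw [h, comp_C_mul_X_coeff, coeff_X_add_C_pow]

theorem eq_sum_mul_pow_of_forall_sum_choose_mul_pow_eq {K ι : Type*} [Field K] [CharZero K]
    [Fintype ι] (n : ℕ) (a : ℕ → K) (lam α β : ι → K)
    (h : ∀ t : K, ∑ j ∈ Finset.range (n + 1), (n.choose j : K) * a j * t ^ j
      = ∑ k, lam k * (α k + β k * t) ^ n)
    {m : ℕ} (hm : m ≤ n) :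
    a m = ∑ k, lam k * (α k ^ (n - m) * β k ^ m) := by
  have hpoly : ∑ j ∈ Finset.range (n + 1), C ((n.choose j : K) * a j) * X ^ j
      = ∑ k, C (lam k) * (C (β k) * X + C (α k)) ^ n :=
    Polynomial.funext fun t => by simpa [eval_finsetSum, add_comm] using h t
  have hcoeff := congrArg (coeff · m) hpoly
  simp only [finsetSum_coeff, coeff_C_mul, coeff_C_mul_X_add_C_pow, coeff_X_pow, mul_ite, mul_one,
    mul_zero, Finset.sum_ite_eq, Finset.mem_range, Nat.lt_succ_of_le hm, if_true] at hcoeff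
  have hchoose : (n.choose m : K) ≠ 0 := Nat.cast_ne_zero.mpr (Nat.choose_pos hm).ne'
  refine mul_left_cancel₀ hchoose ?_
  rw [hcoeff, Finset.mul_sum]
  exact Finset.sum_congr rfl fun k _ => by ring

theorem hankel_eq_sum_smul_vecMulVec {R ι : Type*} [CommRing R] [Fintype ι] (s : ℕ)
    (a : ℕ → R) (lam α β : ι → R)
    (ha : ∀ m ≤ 2 * s, a m = ∑ k, lam k * (α k ^ (2 * s - m) * β k ^ m)) :
    (Matrix.of fun i j : Fin (s + 1) => a (i + j))
      = ∑ k, lam k • vecMulVec (fun i : Fin (s + 1) => α k ^ (s - i) * β k ^ (i : ℕ))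
          (fun i : Fin (s + 1) => α k ^ (s - i) * β k ^ (i : ℕ)) := by
  ext i j
  have hi := Nat.le_of_lt_succ i.isLt
  have hj := Nat.le_of_lt_succ j.isLt
  have hexp : 2 * s - (i + j) = (s - i) + (s - j) := by omega
  simp only [of_apply, Matrix.sum_apply, Matrix.smul_apply, vecMulVec_apply, smul_eq_mul,
    ha _ (by omega : (i : ℕ) + j ≤ 2 * s), hexp, pow_add]
  exact Finset.sum_congr rfl fun k _ => by ring

theorem dotProduct_sum_smul_vecMulVec_mulVec {R n κ : Type*} [CommRing R] [Fintype n] [Fintype κ]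
    (lam : κ → R) (w : κ → n → R) (x : n → R) :
    x ⬝ᵥ (∑ k, lam k • vecMulVec (w k) (w k)) *ᵥ x = ∑ k, lam k * (w k ⬝ᵥ x) ^ 2 := by
  simp [sum_mulVec, smul_mulVec, vecMulVec_mulVec, dotProduct_comm x, sq, sum_dotProduct]

section Inertia

variable {𝕜 n κ : Type*} [Field 𝕜] [LinearOrder 𝕜] [IsStrictOrderedRing 𝕜] [Fintype n] [Fintype κ]

theorem card_pos_le_of_forall_sum_mul_sq_eq
    (μ : n → 𝕜) (v : n → n → 𝕜) (hv : ∀ x, (∀ i, v i ⬝ᵥ x = 0) → x = 0)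
    (lam : κ → 𝕜) (w : κ → n → 𝕜)
    (h : ∀ x, ∑ i, μ i * (v i ⬝ᵥ x) ^ 2 = ∑ k, lam k * (w k ⬝ᵥ x) ^ 2) :
    Nat.card {i // 0 < μ i} ≤ Nat.card {k // 0 < lam k} := by
  by_contra! hlt
  let L := (Matrix.of (Sum.elim (fun i : {i // ¬ 0 < μ i} => v i)
    (fun k : {k // 0 < lam k} => w k))).mulVecLin
  have hker : LinearMap.ker L ≠ ⊥ := LinearMap.ker_ne_bot_of_finrank_lt <| by
    simp only [Nat.card_eq_fintype_card] at hlt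
    simp only [Module.finrank_fintype_fun_eq_card, Fintype.card_sum, Fintype.card_subtype_compl]
    have := Fintype.card_subtype_le (fun i => 0 < μ i)
    omega
  obtain ⟨x, hx, hx0⟩ := Submodule.ne_bot_iff _ |>.mp hker
  have hvx (i) (hi : ¬ 0 < μ i) : v i ⬝ᵥ x = 0 := congrFun hx (.inl ⟨i, hi⟩)
  have hwx (k) (hk : 0 < lam k) : w k ⬝ᵥ x = 0 := congrFun hx (.inr ⟨k, hk⟩)
  obtain ⟨i₀, hi₀⟩ : ∃ i, v i ⬝ᵥ x ≠ 0 := by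
    by_contra! h0
    exact hx0 (hv x h0)
  have hpos : 0 < ∑ i, μ i * (v i ⬝ᵥ x) ^ 2 := by
    refine Finset.sum_pos' (fun i _ => ?_) ⟨i₀, Finset.mem_univ _, ?_⟩
    · by_cases hi : 0 < μ i
      · positivity
      · simp [hvx i hi]
    · have : 0 < μ i₀ := by_contra fun hi => hi₀ (hvx i₀ hi)
      positivity
  have hnonpos : ∑ k, lam k * (w k ⬝ᵥ x) ^ 2 ≤ 0 := by
    refine Finset.sum_nonpos fun k _ => ?_
    by_cases hk : 0 < lam k
    · simp [hwx k hk]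
    · exact mul_nonpos_of_nonpos_of_nonneg (not_lt.mp hk) (sq_nonneg _)
  linarith [h x]

theorem card_neg_le_of_forall_sum_mul_sq_eq
    (μ : n → 𝕜) (v : n → n → 𝕜) (hv : ∀ x, (∀ i, v i ⬝ᵥ x = 0) → x = 0)
    (lam : κ → 𝕜) (w : κ → n → 𝕜)
    (h : ∀ x, ∑ i, μ i * (v i ⬝ᵥ x) ^ 2 = ∑ k, lam k * (w k ⬝ᵥ x) ^ 2) :
    Nat.card {i // μ i < 0} ≤ Nat.card {k // lam k < 0} := by
  have hneg := card_pos_le_of_forall_sum_mul_sq_eq (-μ) v hv (-lam) w fun x => by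
    simp only [Pi.neg_apply, neg_mul, Finset.sum_neg_distrib, h x]
  simpa only [Pi.neg_apply, neg_pos] using hneg

end Inertia

theorem Matrix.IsHermitian.dotProduct_mulVec_eq_sum_eigenvalues {n : Type*} [Fintype n]
    [DecidableEq n] {A : Matrix n n ℝ} (hA : A.IsHermitian) (x : n → ℝ) :
    x ⬝ᵥ A *ᵥ x = ∑ i, hA.eigenvalues i * (⇑(hA.eigenvectorBasis i) ⬝ᵥ x) ^ 2 := by
  set U : Matrix n n ℝ := (hA.eigenvectorUnitary : Matrix n n ℝ)
  have hU : star U *ᵥ x = fun i => ⇑(hA.eigenvectorBasis i) ⬝ᵥ x := by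
    ext i
    simp [U, mulVec, dotProduct]
  have hxU : x ᵥ* U = star U *ᵥ x := by
    rw [star_eq_conjTranspose, conjTranspose_eq_transpose_of_trivial, mulVec_transpose]
  conv_lhs => rw [hA.spectral_theorem, Unitary.conjStarAlgAut_apply, ← mulVec_mulVec,
    ← mulVec_mulVec, dotProduct_mulVec, hxU, hU]
  simp [dotProduct, mulVec_diagonal, sq, mul_left_comm]

theorem Matrix.IsHermitian.eq_zero_of_forall_eigenvectorBasis_dotProduct_eq_zero {n : Type*}
    [Fintype n] [DecidableEq n] {A : Matrix n n ℝ} (hA : A.IsHermitian) {x : n → ℝ}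
    (hx : ∀ i, ⇑(hA.eigenvectorBasis i) ⬝ᵥ x = 0) : x = 0 := by
  set U : Matrix n n ℝ := (hA.eigenvectorUnitary : Matrix n n ℝ)
  have hU : star U *ᵥ x = 0 := by
    ext i
    simpa [U, mulVec, dotProduct] using hx i
  calc x = (U * star U) *ᵥ x := by simp [U]
    _ = 0 := by rw [← mulVec_mulVec, hU, mulVec_zero]

theorem Matrix.IsHermitian.card_eigenvalues_le_of_forall_dotProduct_mulVec_eq {n κ : Type*}
    [Fintype n] [DecidableEq n] [Fintype κ] {A : Matrix n n ℝ} (hA : A.IsHermitian)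
    (lam : κ → ℝ) (w : κ → n → ℝ) (h : ∀ x, x ⬝ᵥ A *ᵥ x = ∑ k, lam k * (w k ⬝ᵥ x) ^ 2) :
    Nat.card {i // 0 < hA.eigenvalues i} ≤ Nat.card {k // 0 < lam k} ∧
    Nat.card {i // hA.eigenvalues i < 0} ≤ Nat.card {k // lam k < 0} := by
  have hform (x : n → ℝ) : ∑ i, hA.eigenvalues i * (⇑(hA.eigenvectorBasis i) ⬝ᵥ x) ^ 2
      = ∑ k, lam k * (w k ⬝ᵥ x) ^ 2 := by
    rw [← hA.dotProduct_mulVec_eq_sum_eigenvalues, h]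
  have hsep (x : n → ℝ) := hA.eq_zero_of_forall_eigenvectorBasis_dotProduct_eq_zero (x := x)
  exact ⟨card_pos_le_of_forall_sum_mul_sq_eq _ _ hsep lam w hform,
    card_neg_le_of_forall_sum_mul_sq_eq _ _ hsep lam w hform⟩

theorem stmt8_general (s r : ℕ) (a : ℕ → ℝ) (lam α β : Fin r → ℝ)
    (hrep : ∀ x y : ℝ,
      ∑ j ∈ Finset.range (2*s+1), (Nat.choose (2*s) j : ℝ) * a j * x^(2*s-j) * y^j
        = ∑ k : Fin r, lam k * (α k * x + β k * y)^(2*s))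
    (A : Matrix (Fin (s+1)) (Fin (s+1)) ℝ)
    (hA : A = Matrix.of fun i j : Fin (s+1) => a ((i:ℕ)+(j:ℕ)))
    (hAh : A.IsHermitian) :
    Nat.card {i // 0 < hAh.eigenvalues i} ≤ Nat.card {k : Fin r // 0 < lam k} ∧
    Nat.card {i // hAh.eigenvalues i < 0} ≤ Nat.card {k : Fin r // lam k < 0} := by
  have hcoeff (m : ℕ) (hm : m ≤ 2 * s) := eq_sum_mul_pow_of_forall_sum_choose_mul_pow_eq (2 * s)
    a lam α β (fun t => by simpa using hrep 1 t) hm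
  refine hAh.card_eigenvalues_le_of_forall_dotProduct_mulVec_eq lam
    (fun k i => α k ^ (s - i) * β k ^ (i : ℕ)) fun x => ?_
  rw [hA, hankel_eq_sum_smul_vecMulVec s a lam α β hcoeff, dotProduct_sum_smul_vecMulVec_mulVec]

theorem stmt8 (s r : ℕ) (a : ℕ → ℝ) (lam α β : Fin r → ℝ)
    (hlam : ∀ k, lam k ≠ 0)
    (hdist : ∀ k l, k ≠ l → α k * β l - α l * β k ≠ 0)
    (hrep : ∀ x y : ℝ,
      ∑ j ∈ Finset.range (2*s+1), (Nat.choose (2*s) j : ℝ) * a j * x^(2*s-j) * y^j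
        = ∑ k : Fin r, lam k * (α k * x + β k * y)^(2*s))
    (A : Matrix (Fin (s+1)) (Fin (s+1)) ℝ)
    (hA : A = Matrix.of fun i j : Fin (s+1) => a ((i:ℕ)+(j:ℕ)))
    (hAh : A.IsHermitian) :
    Nat.card {i // 0 < hAh.eigenvalues i} ≤ Nat.card {k : Fin r // 0 < lam k} ∧
    Nat.card {i // hAh.eigenvalues i < 0} ≤ Nat.card {k : Fin r // lam k < 0} :=
  stmt8_general s r a lam α β hrep A hA hAh
end
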